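/- arXiv:1511.02391 — 2 statements merged into one kernel-verified Lean document; each statement's English description precedes it below -/
import Mathlib

section
/- Let H be a connected q-regular graph of order n. Then for all integers k ≥ 1 and all nonnegative integers s, every eigenvalue of the multiset σ_A(H^k) \ {r_k}, with its multiplicity, belongs to the multiset σ_A(H^{k+s}), where r_k = q·(n^k − 1)/(n − 1) is the regularity degree of H^k (removed with multiplicity one). -/
open Matrix Finset

universe u

/-- The lexicographic product `H[G]` of two simple graphs. -/
def lexProd {α β : Type u} (H : SimpleGraph α) (G : SimpleGraph β) :
    SimpleGraph (α × β) where
  Adj x y := H.Adj x.1 y.1 ∨ (x.1 = y.1 ∧ G.Adj x.2 y.2)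
  symm := ⟨fun x y h => by
    rcases h with h | ⟨h1, h2⟩
    · exact Or.inl (H.symm.symm _ _ h)
    · exact Or.inr ⟨h1.symm, G.symm.symm _ _ h2⟩⟩
  loopless := ⟨fun x h => by
    rcases h with h | ⟨_, h2⟩
    · exact H.loopless.irrefl _ h
    · exact G.loopless.irrefl _ h2⟩

/-- Vertex type of the iterated lexicographic product `H^k[G]`. -/
def lexIterVert (α β : Type u) : ℕ → Type u
  | 0 => β
  | k + 1 => α × lexIterVert α β k

/-- Iterated lexicographic product: `H^0[G] = G`, `H^k[G] = H[H^{k-1}[G]]`. -/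
def lexIter {α β : Type u} (H : SimpleGraph α) (G : SimpleGraph β) :
    (k : ℕ) → SimpleGraph (lexIterVert α β k)
  | 0 => G
  | k + 1 => lexProd H (lexIter H G k)

instance lexIterVert.instFintype {α β : Type u} [Fintype α] [Fintype β] :
    ∀ k, Fintype (lexIterVert α β k)
  | 0 => inferInstanceAs (Fintype β)
  | k + 1 =>
      letI := lexIterVert.instFintype (α := α) (β := β) k
      inferInstanceAs (Fintype (α × lexIterVert α β k))

/-- Vertex type of the lexicographic power `H^k` (with `H^0 = K_1`). -/
def powVert (α : Type u) : ℕ → Type u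
  | 0 => PUnit
  | 1 => α
  | k + 2 => powVert α (k + 1) × α

/-- Lexicographic powers of a graph: `H^1 = H` and `H^k = H^{k-1}[H]` for `k ≥ 2`. -/
def lexPow {α : Type u} (H : SimpleGraph α) : (k : ℕ) → SimpleGraph (powVert α k)
  | 0 => ⊥
  | 1 => H
  | k + 2 => lexProd (lexPow H (k + 1)) H

instance powVert.instFintype {α : Type u} [Fintype α] : ∀ k, Fintype (powVert α k)
  | 0 => inferInstanceAs (Fintype PUnit)
  | 1 => inferInstanceAs (Fintype α)
  | k + 2 =>
      letI := powVert.instFintype (α := α) (k + 1)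
      inferInstanceAs (Fintype (powVert α (k + 1) × α))

/-- The degree of a vertex. -/
noncomputable def gdeg {α : Type u} [Fintype α] (G : SimpleGraph α) (v : α) : ℕ := by
  classical exact G.degree v

/-- The adjacency spectrum of a graph, as the multiset of roots (eigenvalues, with
multiplicity) of the characteristic polynomial of its adjacency matrix over `ℝ`. -/
noncomputable def adjSpectrum {α : Type u} [Fintype α] (G : SimpleGraph α) : Multiset ℝ := by
  classical exact (Matrix.charpoly (G.adjMatrix ℝ)).roots

/-- The Laplacian spectrum of a graph, as the multiset of roots (eigenvalues, with
multiplicity) of the characteristic polynomial of its Laplacian matrix over `ℝ`. -/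
noncomputable def lapSpectrum {α : Type u} [Fintype α] (G : SimpleGraph α) : Multiset ℝ := by
  classical exact (Matrix.charpoly (G.lapMatrix ℝ)).roots

/-!
If `G` is connected and `d`-regular on `m` vertices, the all-ones matrix `J` acts on an
orthonormal eigenbasis of `A(G)` as `m` on the eigenvector for `d` (simple, and constant, by
connectivity) and as `0` on the others (which are orthogonal to the constants). Conjugating
`A(F[G]) = A(F) ⊗ J + I ⊗ A(G)` by `V ⊗ U`, where `V` and `U` are orthonormal eigenbases of
`A(F)` and `A(G)`, therefore gives a diagonal matrix, and
  `σ(F[G]) = {m λ + d | λ ∈ σ(F)} ⊎ |V(F)| · (σ(G) ∖ {d})`.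
With `H^(k+1) = H^k[H]`, `r_(k+1) = n r_k + q` and `r_k ∈ σ(H^k)` this reads
  `σ(H^(k+1)) ∖ {r_(k+1)} = {n λ + q | λ ∈ σ(H^k) ∖ {r_k}} ⊎ n^k · (σ(H) ∖ {q})`,
so by induction on `k` the multisets `σ(H^k) ∖ {r_k}` increase with `k`.
-/

open scoped Kronecker

namespace Matrix

variable {m ι κ : Type*} [Fintype m] [DecidableEq m] [Fintype ι] [DecidableEq ι]
  [Fintype κ] [DecidableEq κ]

theorem charpoly_mul_mul_of_mul_eq_one {R : Type*} [CommRing R] {P Q : Matrix m m R}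
    (h : P * Q = 1) (A : Matrix m m R) : (Q * A * P).charpoly = A.charpoly := by
  rw [charpoly_mul_comm, ← mul_assoc, h, one_mul]

theorem roots_charpoly_diagonal {R : Type*} [CommRing R] [IsDomain R] (d : m → R) :
    (diagonal d).charpoly.roots = univ.val.map d := by
  rw [charpoly_diagonal, prod_eq_multiset_prod]
  simpa [Multiset.map_map, Function.comp_def] using
    Polynomial.roots_multiset_prod_X_sub_C (univ.val.map d)

theorem IsHermitian.star_eigenvectorUnitary_mul_mul_eq_diagonal {A : Matrix m m ℝ}
    (hA : A.IsHermitian) :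
    star (hA.eigenvectorUnitary : Matrix m m ℝ) * A * hA.eigenvectorUnitary =
      diagonal hA.eigenvalues := by
  simpa [Unitary.conjStarAlgAut_star_apply] using hA.conjStarAlgAut_star_eigenvectorUnitary

theorem roots_charpoly_kronecker_add_one_kronecker {A : Matrix ι ι ℝ} (hA : A.IsHermitian)
    {B C U : Matrix κ κ ℝ} (hU : U ∈ unitaryGroup κ ℝ) {b c : κ → ℝ}
    (hB : star U * B * U = diagonal b) (hC : star U * C * U = diagonal c) :
    (A ⊗ₖ B + 1 ⊗ₖ C).charpoly.roots =
      univ.val.map fun p : ι × κ => hA.eigenvalues p.1 * b p.2 + c p.2 := by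
  set V : Matrix ι ι ℝ := (hA.eigenvectorUnitary : Matrix ι ι ℝ)
  have hV : V * star V = 1 := mem_unitaryGroup_iff.mp hA.eigenvectorUnitary.2
  have hW : (V ⊗ₖ U) * star (V ⊗ₖ U) = 1 := by
    rw [star_eq_conjTranspose, conjTranspose_kronecker, ← star_eq_conjTranspose,
      ← star_eq_conjTranspose, ← mul_kronecker_mul, hV, mem_unitaryGroup_iff.mp hU,
      one_kronecker_one]
  have hconj : star (V ⊗ₖ U) * (A ⊗ₖ B + 1 ⊗ₖ C) * (V ⊗ₖ U) =
      diagonal fun p : ι × κ => hA.eigenvalues p.1 * b p.2 + c p.2 := by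
    rw [star_eq_conjTranspose, conjTranspose_kronecker, ← star_eq_conjTranspose,
      ← star_eq_conjTranspose, mul_add, add_mul, ← mul_kronecker_mul, ← mul_kronecker_mul,
      ← mul_kronecker_mul, ← mul_kronecker_mul, hA.star_eigenvectorUnitary_mul_mul_eq_diagonal,
      hB, hC, mul_one, mem_unitaryGroup_iff'.mp hA.eigenvectorUnitary.2,
      diagonal_kronecker_diagonal, ← diagonal_one, diagonal_kronecker_diagonal, diagonal_add]
    simp
  rw [← charpoly_mul_mul_of_mul_eq_one hW, hconj, roots_charpoly_diagonal]

end Matrix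

namespace Multiset

theorem map_univ_prod_mul_single_add {ι κ : Type*} [Fintype ι] [Fintype κ]
    [DecidableEq κ] (f : ι → ℝ) (g : κ → ℝ) (i₀ : κ) (c : ℝ) :
    univ.val.map (fun p : ι × κ => f p.1 * (Pi.single i₀ c : κ → ℝ) p.2 + g p.2) =
      univ.val.map (fun i => c * f i + g i₀) +
        Fintype.card ι • (univ.val.map g).erase (g i₀) := by
  have hrow : ∀ x : ℝ, univ.val.map (fun a => x * (Pi.single i₀ c : κ → ℝ) a + g a) =
      (c * x + g i₀) ::ₘ (univ.val.erase i₀).map g := by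
    intro x
    conv_lhs => rw [← cons_erase (mem_univ i₀)]
    rw [map_cons]
    congr 1
    · simp [mul_comm]
    · refine map_congr rfl fun a ha => ?_
      simp [((Nodup.mem_erase_iff univ.nodup).mp ha).1]
  have herase : (univ.val.map g).erase (g i₀) = (univ.val.erase i₀).map g := by
    conv_lhs => rw [← cons_erase (mem_univ i₀), map_cons]
    exact erase_cons_head _ _
  rw [← univ_product_univ, product_val, herase]
  simp only [SProd.sprod, product, map_bind, map_map,
    Function.comp_def, hrow, bind_cons]
  rw [bind, map_const', join, sum_replicate, card_val,
    card_univ]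

theorem erase_map_add {β γ : Type*} [DecidableEq β] [DecidableEq γ] {f : β → γ}
    (hf : Function.Injective f) {s : Multiset β} {a : β} (ha : a ∈ s) (t : Multiset γ) :
    (s.map f + t).erase (f a) = (s.erase a).map f + t := by
  rw [erase_add_left_pos _ (mem_map_of_mem f ha), map_erase f hf]

theorem monotone_of_eq_map_add_nsmul {β : Type*} {E : ℕ → Multiset β} {f : β → β}
    {c : ℕ → ℕ} (hc : Monotone c) (hc₀ : 1 ≤ c 0)
    (hE : ∀ j, E (j + 1) = (E j).map f + c j • E 0) : Monotone E := by
  refine monotone_nat_of_le_succ fun j => ?_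
  induction j with
  | zero =>
    rw [hE 0]
    exact (one_nsmul (E 0)).symm.le.trans
      ((nsmul_le_nsmul_left (zero_le _) hc₀).trans (le_add_left _ _))
  | succ j ih =>
    rw [hE j, hE (j + 1)]
    exact add_le_add (map_le_map ih) (nsmul_le_nsmul_left (zero_le _) (hc j.le_succ))

end Multiset

namespace SimpleGraph

variable {V : Type*} [Fintype V] {G : SimpleGraph V} [DecidableRel G.Adj] {d : ℕ}

theorem IsRegularOfDegree.adjMatrix_mulVec_one {R : Type*} [NonAssocSemiring R]
    (hd : G.IsRegularOfDegree d) : G.adjMatrix R *ᵥ 1 = (d : R) • 1 := by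
  ext v
  simp [hd v]

variable [DecidableEq V]

theorem IsRegularOfDegree.degree_mem_roots_charpoly [Nonempty V] (hd : G.IsRegularOfDegree d) :
    (d : ℝ) ∈ (G.adjMatrix ℝ).charpoly.roots := by
  rw [Polynomial.mem_roots (G.adjMatrix ℝ).charpoly_monic.ne_zero,
    ← Matrix.mem_spectrum_iff_isRoot_charpoly, spectrum.mem_iff, Matrix.isUnit_iff_isUnit_det,
    isUnit_iff_ne_zero, not_not, ← Matrix.exists_mulVec_eq_zero_iff]
  refine ⟨1, one_ne_zero, ?_⟩
  rw [Matrix.sub_mulVec, hd.adjMatrix_mulVec_one]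
  ext v
  simp

variable (hA : (G.adjMatrix ℝ).IsHermitian)

theorem IsRegularOfDegree.sum_eigenvectorBasis_eq_zero (hd : G.IsRegularOfDegree d) {j : V}
    (hj : hA.eigenvalues j ≠ d) : ∑ a, hA.eigenvectorBasis j a = 0 := by
  set v : V → ℝ := ⇑(hA.eigenvectorBasis j)
  have key : hA.eigenvalues j * (1 ⬝ᵥ v) = d * (1 ⬝ᵥ v) :=
    calc hA.eigenvalues j * (1 ⬝ᵥ v)
        = 1 ⬝ᵥ (G.adjMatrix ℝ *ᵥ v) := by
          rw [hA.mulVec_eigenvectorBasis, dotProduct_smul, smul_eq_mul]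
      _ = (G.adjMatrix ℝ *ᵥ 1) ⬝ᵥ v := by
          rw [dotProduct_mulVec, ← Matrix.mulVec_transpose, transpose_adjMatrix]
      _ = d * (1 ⬝ᵥ v) := by
          rw [hd.adjMatrix_mulVec_one, smul_dotProduct, smul_eq_mul]
  have : (hA.eigenvalues j - d) * (1 ⬝ᵥ v) = 0 := by rw [sub_mul, key, sub_self]
  simpa [sub_eq_zero, hj, one_dotProduct] using this

theorem IsRegularOfDegree.eigenvectorBasis_apply_eq (hd : G.IsRegularOfDegree d)
    (hconn : G.Connected) {j : V} (hj : hA.eigenvalues j = d) (a b : V) :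
    hA.eigenvectorBasis j a = hA.eigenvectorBasis j b := by
  have hlap : G.lapMatrix ℝ *ᵥ ⇑(hA.eigenvectorBasis j) = 0 := by
    ext x
    simp [lapMatrix, Matrix.sub_mulVec, hA.mulVec_eigenvectorBasis, hj, degMatrix_mulVec_apply,
      hd x]
  exact G.lapMatrix_mulVec_eq_zero_iff_forall_reachable.mp hlap a b (hconn.preconnected a b)

theorem IsRegularOfDegree.exists_eigenvalues_eq_iff (hd : G.IsRegularOfDegree d)
    (hconn : G.Connected) : ∃ i₀, ∀ j, hA.eigenvalues j = d ↔ j = i₀ := by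
  have : Nonempty V := hconn.nonempty
  obtain ⟨i₀, -, hi₀⟩ : ∃ i₀ ∈ univ.val, hA.eigenvalues i₀ = d := by
    simpa [hA.roots_charpoly_eq_eigenvalues] using hd.degree_mem_roots_charpoly
  refine ⟨i₀, fun j => ⟨fun hj => ?_, fun h => h ▸ hi₀⟩⟩
  by_contra hne
  -- Eigenvectors for `d` are constant, and two constant vectors cannot be orthonormal.
  obtain ⟨x₀⟩ := ‹Nonempty V›
  have hinner : ∀ {k l}, hA.eigenvalues k = d → hA.eigenvalues l = d →
      inner ℝ (hA.eigenvectorBasis k) (hA.eigenvectorBasis l) =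
        Fintype.card V * (hA.eigenvectorBasis k x₀ * hA.eigenvectorBasis l x₀) := by
    intro k l hk hl
    simp [PiLp.inner_apply, hd.eigenvectorBasis_apply_eq hA hconn hk _ x₀,
      hd.eigenvectorBasis_apply_eq hA hconn hl _ x₀, mul_comm]
  have horth := orthonormal_iff_ite.mp hA.eigenvectorBasis.orthonormal
  have h₁ := horth j i₀
  have h₂ := horth j j
  have h₃ := horth i₀ i₀
  rw [if_neg hne, hinner hj hi₀] at h₁
  rw [if_pos rfl, hinner hj hj] at h₂
  rw [if_pos rfl, hinner hi₀ hi₀] at h₃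
  nlinarith

theorem IsRegularOfDegree.star_eigenvectorUnitary_mul_allOnes_mul (hd : G.IsRegularOfDegree d)
    (hconn : G.Connected) {i₀ : V} (hi₀ : ∀ j, hA.eigenvalues j = d ↔ j = i₀) :
    star (hA.eigenvectorUnitary : Matrix V V ℝ) * Matrix.of (fun _ _ => 1) *
        (hA.eigenvectorUnitary : Matrix V V ℝ) =
      diagonal (Pi.single i₀ (Fintype.card V : ℝ)) := by
  set U : Matrix V V ℝ := (hA.eigenvectorUnitary : Matrix V V ℝ)
  suffices Matrix.of (fun _ _ => 1) * U = U * diagonal (Pi.single i₀ (Fintype.card V : ℝ)) by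
    rw [mul_assoc, this, ← mul_assoc, Matrix.mem_unitaryGroup_iff'.mp hA.eigenvectorUnitary.2,
      one_mul]
  ext a j
  rw [Matrix.mul_diagonal, Matrix.mul_apply]
  simp only [Matrix.of_apply, one_mul, U, Matrix.IsHermitian.eigenvectorUnitary_apply]
  by_cases hj : j = i₀
  · subst hj
    simp [hd.eigenvectorBasis_apply_eq hA hconn ((hi₀ j).mpr rfl) _ a, mul_comm]
  · simp [hd.sum_eigenvectorBasis_eq_zero hA (mt (hi₀ j).mp hj), hj]

end SimpleGraph

theorem adjSpectrum_eq_roots_charpoly {V : Type u} [Fintype V] [DecidableEq V]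
    (G : SimpleGraph V) [DecidableRel G.Adj] :
    adjSpectrum G = (G.adjMatrix ℝ).charpoly.roots := by
  unfold adjSpectrum
  congr!

theorem gdeg_eq_degree {V : Type u} [Fintype V] (G : SimpleGraph V) [DecidableRel G.Adj]
    (v : V) : gdeg G v = G.degree v := by
  unfold gdeg
  congr!

theorem adjMatrix_lexProd {ι κ : Type u} [DecidableEq ι] {R : Type*} [NonAssocSemiring R]
    (F : SimpleGraph ι) (G : SimpleGraph κ) [DecidableRel F.Adj] [DecidableRel G.Adj]
    [DecidableRel (lexProd F G).Adj] :
    (lexProd F G).adjMatrix R =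
      F.adjMatrix R ⊗ₖ Matrix.of (fun _ _ => 1) + 1 ⊗ₖ G.adjMatrix R := by
  ext ⟨i, a⟩ ⟨j, b⟩
  have hadj : (lexProd F G).Adj (i, a) (j, b) ↔ F.Adj i j ∨ (i = j ∧ G.Adj a b) := Iff.rfl
  by_cases hF : F.Adj i j
  · simp [hadj, hF, hF.ne]
  · rcases eq_or_ne i j with rfl | hij
    · simp [hadj]
    · simp [hadj, hF, hij]

section LexProd

variable {ι κ : Type u} [Fintype ι] [DecidableEq ι] [Fintype κ] [DecidableEq κ]

theorem adjSpectrum_lexProd (F : SimpleGraph ι) {G : SimpleGraph κ} [DecidableRel G.Adj]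
    {d : ℕ} (hd : G.IsRegularOfDegree d) (hconn : G.Connected) :
    adjSpectrum (lexProd F G) =
      (adjSpectrum F).map (fun x : ℝ => Fintype.card κ * x + d) +
        Fintype.card ι • (adjSpectrum G).erase (d : ℝ) := by
  classical
  have hF := F.isHermitian_adjMatrix ℝ
  have hG := G.isHermitian_adjMatrix ℝ
  obtain ⟨i₀, hi₀⟩ := hd.exists_eigenvalues_eq_iff hG hconn
  rw [adjSpectrum_eq_roots_charpoly, adjSpectrum_eq_roots_charpoly,
    adjSpectrum_eq_roots_charpoly, adjMatrix_lexProd,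
    Matrix.roots_charpoly_kronecker_add_one_kronecker hF hG.eigenvectorUnitary.2
      (hd.star_eigenvectorUnitary_mul_allOnes_mul hG hconn hi₀)
      hG.star_eigenvectorUnitary_mul_mul_eq_diagonal,
    hF.roots_charpoly_eq_eigenvalues, hG.roots_charpoly_eq_eigenvalues,
    Multiset.map_univ_prod_mul_single_add, ← (hi₀ i₀).mpr rfl]
  simp [Multiset.map_map]

end LexProd

-- `r_k = d (n^k - 1) / (n - 1)` as a geometric sum, avoiding truncated `ℕ` division.
def lexPowDegree (n d k : ℕ) : ℕ := d * ∑ i ∈ range k, n ^ i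

theorem lexPowDegree_one (n d : ℕ) : lexPowDegree n d 1 = d := by
  simp [lexPowDegree]

theorem lexPowDegree_succ (n d k : ℕ) :
    lexPowDegree n d (k + 1) = n * lexPowDegree n d k + d := by
  rw [lexPowDegree, lexPowDegree, geom_sum_succ]
  ring

theorem lexPowDegree_eq_mul_div {n d : ℕ} (h : d < n) (k : ℕ) :
    lexPowDegree n d k = d * ((n ^ k - 1) / (n - 1)) := by
  rcases lt_or_ge n 2 with hn | hn
  · obtain rfl : d = 0 := by omega
    simp [lexPowDegree]
  · rw [lexPowDegree, Nat.geomSum_eq hn]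

section LexPow

variable {α : Type u} [Fintype α]

theorem card_powVert_succ (k : ℕ) :
    Fintype.card (powVert α (k + 1)) = Fintype.card α ^ (k + 1) := by
  induction k with
  | zero => rw [zero_add, pow_one]; rfl
  | succ k ih =>
    rw [pow_succ, ← ih, ← Fintype.card_prod]
    rfl

variable {H : SimpleGraph α} [DecidableRel H.Adj] {d : ℕ}

theorem adjSpectrum_lexPow_succ (hd : H.IsRegularOfDegree d) (hconn : H.Connected) {k : ℕ}
    (hk : 1 ≤ k) :
    adjSpectrum (lexPow H (k + 1)) =
      (adjSpectrum (lexPow H k)).map (fun x : ℝ => Fintype.card α * x + d) +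
        Fintype.card α ^ k • (adjSpectrum H).erase (d : ℝ) := by
  classical
  obtain ⟨j, rfl⟩ := Nat.exists_eq_add_of_le' hk
  rw [← card_powVert_succ]
  exact adjSpectrum_lexProd (lexPow H (j + 1)) hd hconn

theorem lexPowDegree_mem_adjSpectrum (hd : H.IsRegularOfDegree d) (hconn : H.Connected)
    {k : ℕ} (hk : 1 ≤ k) :
    (lexPowDegree (Fintype.card α) d k : ℝ) ∈ adjSpectrum (lexPow H k) := by
  classical
  induction k, hk using Nat.le_induction with
  | base =>
    have : Nonempty α := hconn.nonempty
    rw [lexPowDegree_one]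
    show (d : ℝ) ∈ adjSpectrum H
    rw [adjSpectrum_eq_roots_charpoly]
    exact hd.degree_mem_roots_charpoly
  | succ k hk ih =>
    rw [adjSpectrum_lexPow_succ hd hconn hk, lexPowDegree_succ]
    push_cast
    exact Multiset.mem_add.mpr (Or.inl (Multiset.mem_map_of_mem _ ih))

theorem adjSpectrum_lexPow_succ_erase (hd : H.IsRegularOfDegree d) (hconn : H.Connected)
    {k : ℕ} (hk : 1 ≤ k) :
    (adjSpectrum (lexPow H (k + 1))).erase (lexPowDegree (Fintype.card α) d (k + 1) : ℝ) =
      ((adjSpectrum (lexPow H k)).erase (lexPowDegree (Fintype.card α) d k : ℝ)).map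
          (fun x : ℝ => Fintype.card α * x + d) +
        Fintype.card α ^ k • (adjSpectrum H).erase (d : ℝ) := by
  have : Nonempty α := hconn.nonempty
  have hinj : Function.Injective fun x : ℝ => Fintype.card α * x + d := fun x y h => by
    simpa [Fintype.card_ne_zero] using h
  rw [adjSpectrum_lexPow_succ hd hconn hk, ← Multiset.erase_map_add hinj
    (lexPowDegree_mem_adjSpectrum hd hconn hk), lexPowDegree_succ]
  push_cast
  rfl

end LexPow

/-- For a connected `q`-regular graph `H` of order `n`, the multiset
`σ_A(H^k)` minus one occurrence of the regularity degree `r_k = q·(n^k - 1)/(n - 1)` is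
contained (with multiplicities) in the multiset `σ_A(H^(k+s))`. -/
theorem adjSpectrum_lexPow_mono {α : Type u} [Fintype α]
    (H : SimpleGraph α) (n q : ℕ)
    (hn : Fintype.card α = n) (hconn : H.Connected) (hreg : ∀ v, gdeg H v = q) :
    ∀ k : ℕ, 1 ≤ k → ∀ s : ℕ,
      (adjSpectrum (lexPow H k)).erase ((q * ((n ^ k - 1) / (n - 1)) : ℕ) : ℝ)
        ≤ adjSpectrum (lexPow H (k + s)) := by
  classical
  subst hn
  have hd : H.IsRegularOfDegree q := fun v => by rw [← gdeg_eq_degree]; exact hreg v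
  have : Nonempty α := hconn.nonempty
  have hqn : q < Fintype.card α := hd (Classical.arbitrary α) ▸ H.degree_lt_card_verts _
  set E : ℕ → Multiset ℝ := fun j =>
    (adjSpectrum (lexPow H (j + 1))).erase (lexPowDegree (Fintype.card α) q (j + 1) : ℝ)
  have hE : Monotone E := by
    refine Multiset.monotone_of_eq_map_add_nsmul (f := fun x : ℝ => Fintype.card α * x + q)
      (fun _ _ h => Nat.pow_le_pow_right hqn.pos (Nat.succ_le_succ h))
      (by simpa using Nat.one_le_of_lt hqn) fun j => ?_
    simp only [E, zero_add, lexPowDegree_one]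
    exact adjSpectrum_lexPow_succ_erase hd hconn (Nat.le_add_left 1 j)
  intro k hk s
  obtain ⟨j, rfl⟩ := Nat.exists_eq_add_of_le' hk
  rw [← lexPowDegree_eq_mul_div hqn (j + 1)]
  calc _ = E j := rfl
    _ ≤ E (j + s) := hE (Nat.le_add_right j s)
    _ ≤ adjSpectrum (lexPow H (j + 1 + s)) := by
      rw [Nat.add_right_comm]
      exact Multiset.erase_le _ _
end

section
/- Let H be a connected graph of order n with Laplacian eigenvalues μ_1(H) ≥ ... ≥ μ_n(H). Then for every integer k ≥ 1, the largest Laplacian eigenvalue of the lexicographic power H^k satisfies μ_1(H^k) = n^{k−1}·μ_1(H). -/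
open Matrix Finset

universe u

/-!
Write `μ(G)` for the largest Laplacian eigenvalue of `G`, the maximum of `vᵀ L_G v / vᵀ v`.
For `F[H]` with `|H| = n`, let `v_x = v (x, ·)` be the blocks of `v`, `s x = ∑ v_x` their sums
and `g x = n ‖v_x‖² - (s x)²`. Sorting the edges of `F[H]` into those between and those
inside blocks gives
  `vᵀ L_{F[H]} v = sᵀ L_F s + ∑ₓ (deg_F x · g x + v_xᵀ L_H v_x)`.
Since `v_xᵀ L_H v_x ≤ g x` (the Laplacian of `K_n` dominates that of `H`), a degree bound
`deg_F x + 1 ≤ μ(F)` makes the right side at most `μ(F) (‖s‖² + ∑ₓ g x) = n μ(F) ‖v‖²`; lifting an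
eigenvector of `F` along the first coordinate attains this, so `μ(F[H]) = n μ(F)`.
The degree bound holds for a connected `H` on at least two vertices (test the Rayleigh quotient
on `deg u · e_u - 1_{N(u)}`) and passes to `F[H]`, since
`deg_{F[H]} (x, y) = n deg_F x + deg_H y < n (deg_F x + 1)`. Induction on `k` finishes the proof.
-/

namespace Matrix

variable {ι K : Type*} [Fintype ι] [DecidableEq ι]

theorem mem_roots_charpoly_iff [Field K] (M : Matrix ι ι K) (t : K) :
    t ∈ M.charpoly.roots ↔ ∃ v ≠ 0, M *ᵥ v = t • v := by
  rw [Polynomial.mem_roots M.charpoly_monic.ne_zero, Polynomial.IsRoot.def, eval_charpoly,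
    ← exists_mulVec_eq_zero_iff]
  simp only [sub_mulVec, sub_eq_zero, scalar_apply, ← smul_one_eq_diagonal, smul_mulVec,
    one_mulVec]
  exact exists_congr fun v => and_congr_right fun _ => eq_comm

theorem IsHermitian.dotProduct_mulVec_le {M : Matrix ι ι ℝ} (hM : M.IsHermitian) {c : ℝ}
    (hc : ∀ t ∈ M.charpoly.roots, t ≤ c) (v : ι → ℝ) :
    v ⬝ᵥ (M *ᵥ v) ≤ c * (v ⬝ᵥ v) := by
  have hA : (c • 1 - M).IsHermitian := (isHermitian_one.smul (IsSelfAdjoint.all c)).sub hM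
  have hpsd : (c • 1 - M).PosSemidef := by
    refine hA.posSemidef_iff_eigenvalues_nonneg.mpr fun i => ?_
    have hroot : c - hA.eigenvalues i ∈ M.charpoly.roots := by
      refine (M.mem_roots_charpoly_iff _).mpr ⟨hA.eigenvectorBasis i, ?_, ?_⟩
      · simpa using hA.eigenvectorBasis.orthonormal.ne_zero i
      · have hEig := hA.mulVec_eigenvectorBasis i
        rw [sub_mulVec, smul_mulVec, one_mulVec, sub_eq_iff_eq_add] at hEig
        rw [sub_smul, hEig]
        abel
    simpa using hc _ hroot
  have := hpsd.dotProduct_mulVec_nonneg v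
  simp only [star_trivial, sub_mulVec, smul_mulVec, one_mulVec, dotProduct_sub,
    dotProduct_smul, smul_eq_mul] at this
  linarith

end Matrix

theorem sum_sum_sub_sq {α : Type*} [Fintype α] (a b : α → ℝ) :
    ∑ y, ∑ y', (a y - b y') ^ 2 = (Fintype.card α * (a ⬝ᵥ a) - (∑ y, a y) ^ 2)
      + (Fintype.card α * (b ⬝ᵥ b) - (∑ y, b y) ^ 2) + (∑ y, a y - ∑ y, b y) ^ 2 := by
  simp only [sub_sq, sum_add_distrib, sum_sub_distrib, sum_const, card_univ, nsmul_eq_mul,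
    ← mul_sum, ← sum_mul, dotProduct, ← sq]
  ring

theorem isGreatest_of_eq_map_antitone {m : ℕ} {f : Fin m → ℝ} (hf : Antitone f) {s : Multiset ℝ}
    (hs : s = Multiset.map f univ.val) (hm : 0 < m) : IsGreatest {t | t ∈ s} (f ⟨0, hm⟩) := by
  subst hs
  refine ⟨Multiset.mem_map_of_mem f (mem_univ_val _),
    fun t (ht : t ∈ Multiset.map f univ.val) => ?_⟩
  obtain ⟨i, -, rfl⟩ := Multiset.mem_map.mp ht
  exact hf (Nat.zero_le i.val)

namespace SimpleGraph

variable {V : Type u} [Fintype V] (G : SimpleGraph V) [DecidableRel G.Adj]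

theorem sum_sum_adj_add (g : V → ℝ) :
    ∑ i, ∑ j, (if G.Adj i j then g i + g j else 0) = 2 * ∑ i, G.degree i * g i := by
  have hrow : ∑ i, ∑ j, (if G.Adj i j then g i else 0) = ∑ i, G.degree i * g i := by
    simp_rw [G.degree_eq_sum_if_adj (R := ℝ), sum_mul, ite_mul, one_mul, zero_mul]
  have hcol : ∑ i, ∑ j, (if G.Adj i j then g j else 0) = ∑ i, G.degree i * g i := by
    rw [sum_comm, ← hrow]
    simp_rw [G.adj_comm]
  simp_rw [ite_add_zero, sum_add_distrib, hrow, hcol]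
  ring

variable [DecidableEq V]

theorem lapSpectrum_eq : lapSpectrum G = (G.lapMatrix ℝ).charpoly.roots := by
  unfold lapSpectrum
  congr!

theorem mem_lapSpectrum_iff (t : ℝ) :
    t ∈ lapSpectrum G ↔ ∃ v ≠ 0, G.lapMatrix ℝ *ᵥ v = t • v := by
  rw [lapSpectrum_eq, mem_roots_charpoly_iff]

theorem zero_mem_lapSpectrum [Nonempty V] : 0 ∈ lapSpectrum G :=
  (G.mem_lapSpectrum_iff 0).mpr
    ⟨fun _ => 1, Function.ne_iff.mpr ⟨Classical.arbitrary V, one_ne_zero⟩, by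
      rw [lapMatrix_mulVec_const_eq_zero, zero_smul]⟩

theorem two_mul_dotProduct_lapMatrix_mulVec (v : V → ℝ) :
    2 * (v ⬝ᵥ (G.lapMatrix ℝ *ᵥ v)) = ∑ i, ∑ j, if G.Adj i j then (v i - v j) ^ 2 else 0 := by
  rw [← toLinearMap₂'_apply', lapMatrix_toLinearMap₂']
  ring

theorem lapMatrix_mulVec_apply_eq_sum (v : V → ℝ) (i : V) :
    (G.lapMatrix ℝ *ᵥ v) i = ∑ j, if G.Adj i j then v i - v j else 0 := by
  rw [lapMatrix_mulVec_apply, degree_eq_sum_if_adj, sum_mul, neighborFinset_eq_filter,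
    sum_filter, ← sum_sub_distrib]
  exact sum_congr rfl fun j _ => by split_ifs <;> simp

theorem dotProduct_lapMatrix_mulVec_le_card (v : V → ℝ) :
    v ⬝ᵥ (G.lapMatrix ℝ *ᵥ v) ≤ Fintype.card V * (v ⬝ᵥ v) - (∑ i, v i) ^ 2 := by
  have h := G.two_mul_dotProduct_lapMatrix_mulVec v
  have hle : ∑ i, ∑ j, (if G.Adj i j then (v i - v j) ^ 2 else 0) ≤ ∑ i, ∑ j, (v i - v j) ^ 2 :=
    sum_le_sum fun i _ => sum_le_sum fun j _ => by split_ifs <;> simp [sq_nonneg]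
  rw [sum_sum_sub_sq] at hle
  linarith

variable {G}

theorem dotProduct_lapMatrix_mulVec_le_of_isGreatest {c : ℝ}
    (hc : IsGreatest {t | t ∈ lapSpectrum G} c) (v : V → ℝ) :
    v ⬝ᵥ (G.lapMatrix ℝ *ᵥ v) ≤ c * (v ⬝ᵥ v) :=
  (G.isHermitian_lapMatrix ℝ).dotProduct_mulVec_le
    (fun t ht => hc.2 (by rwa [← lapSpectrum_eq] at ht)) v

theorem isGreatest_lapSpectrum_of_dotProduct_le {c : ℝ}
    (hle : ∀ v : V → ℝ, v ⬝ᵥ (G.lapMatrix ℝ *ᵥ v) ≤ c * (v ⬝ᵥ v))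
    (hc : ∃ v ≠ 0, G.lapMatrix ℝ *ᵥ v = c • v) :
    IsGreatest {t | t ∈ lapSpectrum G} c := by
  refine ⟨(G.mem_lapSpectrum_iff c).mpr hc, fun t ht => ?_⟩
  obtain ⟨v, hv, hLv⟩ := (G.mem_lapSpectrum_iff t).mp ht
  have := hle v
  rw [hLv, dotProduct_smul, smul_eq_mul] at this
  exact le_of_mul_le_mul_right this (by simpa using dotProduct_star_self_pos_iff.mpr hv)

theorem degree_add_one_le_of_dotProduct_le {c : ℝ}
    (hle : ∀ v : V → ℝ, v ⬝ᵥ (G.lapMatrix ℝ *ᵥ v) ≤ c * (v ⬝ᵥ v)) {u : V}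
    (hu : 0 < G.degree u) : (G.degree u : ℝ) + 1 ≤ c := by
  set d : ℝ := (G.degree u : ℝ)
  have hdeg : ∑ w, (if G.Adj u w then (1 : ℝ) else 0) = d := (G.degree_eq_sum_if_adj u).symm
  let z : V → ℝ := fun w => if w = u then d else if G.Adj u w then -1 else 0
  have hzz : z ⬝ᵥ z = d * (d + 1) := by
    have hsq : ∀ w, z w * z w = (if w = u then d ^ 2 else 0) + if G.Adj u w then 1 else 0 := by
      intro w
      rcases eq_or_ne w u with rfl | hw
      · simp [z, sq]
      · by_cases h : G.Adj u w <;> simp [z, hw, h]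
    simp only [dotProduct, hsq, sum_add_distrib, sum_ite_eq', mem_univ, if_true, hdeg]
    ring
  -- each edge at `u` contributes `(d + 1) ^ 2`, once in each orientation
  have hedge : ∀ i j, (d + 1) ^ 2 * ((if i = u then (if G.Adj u j then 1 else 0) else 0)
      + (if j = u then (if G.Adj i u then 1 else 0) else 0))
      ≤ if G.Adj i j then (z i - z j) ^ 2 else 0 := by
    intro i j
    by_cases hij : G.Adj i j
    · rw [if_pos hij]
      rcases eq_or_ne i u with rfl | hi
      · simp [z, hij.ne', hij]
      rcases eq_or_ne j u with rfl | hj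
      · simp only [z, hi, hij.symm, hij, if_true, if_false]
        exact le_of_eq (by ring)
      · simp [hi, hj, sq_nonneg]
    · have : ¬ G.Adj j i := fun h => hij h.symm
      split_ifs <;> simp_all
  have hlow : d * (d + 1) * (d + 1) ≤ z ⬝ᵥ (G.lapMatrix ℝ *ᵥ z) := by
    have := sum_le_sum fun i (_ : i ∈ univ) => sum_le_sum fun j (_ : j ∈ univ) => hedge i j
    simp only [← two_mul_dotProduct_lapMatrix_mulVec, ← mul_sum, sum_add_distrib,
      sum_ite_irrel, sum_const_zero, sum_ite_eq', mem_univ, if_true, G.adj_comm _ u, hdeg] at this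
    linarith
  have hd : 0 < d * (d + 1) := by positivity
  have := (hlow.trans (hle z)).trans_eq (by rw [hzz]; ring : c * (z ⬝ᵥ z) = d * (d + 1) * c)
  exact le_of_mul_le_mul_left this hd

theorem eq_zero_of_lapSpectrum_eq_map [Nonempty V] {m : ℕ} (hm : m ≤ 1) {f : Fin m → ℝ}
    (hf : lapSpectrum G = Multiset.map f univ.val) (i : Fin m) : f i = 0 := by
  obtain ⟨j, -, hj⟩ := Multiset.mem_map.mp (hf ▸ G.zero_mem_lapSpectrum)
  rwa [show i = j from Fin.ext (by omega)]

end SimpleGraph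

@[simp]
theorem lexProd_adj {ι α : Type u} (F : SimpleGraph ι) (H : SimpleGraph α) {x y : ι × α} :
    (lexProd F H).Adj x y ↔ F.Adj x.1 y.1 ∨ (x.1 = y.1 ∧ H.Adj x.2 y.2) :=
  Iff.rfl

section LexProd

variable {ι α : Type u} [Fintype ι] [Fintype α] [DecidableEq ι]
  (F : SimpleGraph ι) (H : SimpleGraph α)
  [DecidableRel F.Adj] [DecidableRel H.Adj] [DecidableRel (lexProd F H).Adj]

theorem sum_lexProd_adj {M : Type*} [AddCommMonoid M] (p : ι × α) (t : ι × α → M) :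
    ∑ q, (if (lexProd F H).Adj p q then t q else 0)
      = ∑ x, (if F.Adj p.1 x then ∑ y, t (x, y) else 0)
        + ∑ y, if H.Adj p.2 y then t (p.1, y) else 0 := by
  have hrow : ∀ x, ∑ y, (if (lexProd F H).Adj p (x, y) then t (x, y) else 0)
      = (if F.Adj p.1 x then ∑ y, t (x, y) else 0)
        + if p.1 = x then ∑ y, (if H.Adj p.2 y then t (x, y) else 0) else 0 := by
    intro x
    by_cases hF : F.Adj p.1 x
    · simp [hF, hF.ne]
    · by_cases hx : p.1 = x <;> simp [hF, hx]
  rw [Fintype.sum_prod_type]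
  simp_rw [hrow, sum_add_distrib, sum_ite_eq]
  simp

theorem degree_lexProd (p : ι × α) :
    (lexProd F H).degree p = Fintype.card α * F.degree p.1 + H.degree p.2 := by
  have := sum_lexProd_adj F H p (fun _ => (1 : ℝ))
  simp only [sum_const, card_univ, nsmul_eq_mul, mul_one, ← mul_boole _ (Fintype.card α : ℝ),
    ← mul_sum, ← SimpleGraph.degree_eq_sum_if_adj] at this
  exact_mod_cast this

variable [DecidableEq α]

theorem lapMatrix_lexProd_mulVec_comp_fst (f : ι → ℝ) :
    (lexProd F H).lapMatrix ℝ *ᵥ (fun p => f p.1)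
      = fun p => Fintype.card α * (F.lapMatrix ℝ *ᵥ f) p.1 := by
  ext p
  rw [SimpleGraph.lapMatrix_mulVec_apply_eq_sum, sum_lexProd_adj,
    SimpleGraph.lapMatrix_mulVec_apply_eq_sum, mul_sum]
  simp only [sub_self, ite_self, sum_const_zero, add_zero, sum_const, card_univ, nsmul_eq_mul]
  exact sum_congr rfl fun x _ => by split_ifs <;> simp

open Function

theorem dotProduct_lapMatrix_lexProd_mulVec (v : ι × α → ℝ) :
    v ⬝ᵥ ((lexProd F H).lapMatrix ℝ *ᵥ v)
      = (fun x => ∑ y, curry v x y) ⬝ᵥ (F.lapMatrix ℝ *ᵥ fun x => ∑ y, curry v x y)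
        + ∑ x, (F.degree x * (Fintype.card α * (curry v x ⬝ᵥ curry v x) - (∑ y, curry v x y) ^ 2)
          + curry v x ⬝ᵥ (H.lapMatrix ℝ *ᵥ curry v x)) := by
  have hsplit : ∀ x y, ∑ q, (if (lexProd F H).Adj (x, y) q then (v (x, y) - v q) ^ 2 else 0)
      = ∑ x', (if F.Adj x x' then ∑ y', (curry v x y - curry v x' y') ^ 2 else 0)
        + ∑ y', if H.Adj y y' then (curry v x y - curry v x y') ^ 2 else 0 :=
    fun x y => sum_lexProd_adj F H (x, y) _
  have hbetween : ∀ x,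
      ∑ y, ∑ x', (if F.Adj x x' then ∑ y', (curry v x y - curry v x' y') ^ 2 else 0)
      = ∑ x', ((if F.Adj x x' then
          (Fintype.card α * (curry v x ⬝ᵥ curry v x) - (∑ y, curry v x y) ^ 2)
            + (Fintype.card α * (curry v x' ⬝ᵥ curry v x') - (∑ y, curry v x' y) ^ 2) else 0)
        + if F.Adj x x' then (∑ y, curry v x y - ∑ y, curry v x' y) ^ 2 else 0) := by
    intro x
    rw [sum_comm]
    simp_rw [sum_ite_irrel, sum_const_zero, sum_sum_sub_sq, ← ite_add_zero]
  have h := (lexProd F H).two_mul_dotProduct_lapMatrix_mulVec v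
  rw [Fintype.sum_prod_type] at h
  simp_rw [hsplit, sum_add_distrib, hbetween, sum_add_distrib, F.sum_sum_adj_add,
    ← F.two_mul_dotProduct_lapMatrix_mulVec, ← H.two_mul_dotProduct_lapMatrix_mulVec,
    ← mul_sum] at h
  rw [sum_add_distrib]
  linarith

theorem isGreatest_lapSpectrum_lexProd [Nonempty α] {c : ℝ}
    (hF : IsGreatest {t | t ∈ lapSpectrum F} c) (hdeg : ∀ x, (F.degree x : ℝ) + 1 ≤ c) :
    IsGreatest {t | t ∈ lapSpectrum (lexProd F H)} (Fintype.card α * c) := by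
  refine SimpleGraph.isGreatest_lapSpectrum_of_dotProduct_le (fun v => ?_) ?_
  · set g : ι → ℝ := fun x =>
      Fintype.card α * (curry v x ⬝ᵥ curry v x) - (∑ y, curry v x y) ^ 2
    have hblock : ∀ x,
        F.degree x * g x + curry v x ⬝ᵥ (H.lapMatrix ℝ *ᵥ curry v x) ≤ c * g x := by
      intro x
      have hH := H.dotProduct_lapMatrix_mulVec_le_card (curry v x)
      have hH₀ : 0 ≤ curry v x ⬝ᵥ (H.lapMatrix ℝ *ᵥ curry v x) := by
        simpa using (H.posSemidef_lapMatrix ℝ).dotProduct_mulVec_nonneg (curry v x)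
      nlinarith [hdeg x]
    have hsums := SimpleGraph.dotProduct_lapMatrix_mulVec_le_of_isGreatest hF
      (fun x => ∑ y, curry v x y)
    have hv : v ⬝ᵥ v = ∑ x, curry v x ⬝ᵥ curry v x := Fintype.sum_prod_type _
    rw [dotProduct_lapMatrix_lexProd_mulVec, hv, mul_assoc, mul_sum]
    calc _ ≤ c * ((fun x => ∑ y, curry v x y) ⬝ᵥ fun x => ∑ y, curry v x y) + ∑ x, c * g x :=
          add_le_add hsums (sum_le_sum fun x _ => hblock x)
      _ = _ := by
        rw [dotProduct, mul_sum, mul_sum, ← sum_add_distrib]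
        exact sum_congr rfl fun x _ => by simp only [g]; ring
  · obtain ⟨f, hf, hLf⟩ := (F.mem_lapSpectrum_iff c).mp hF.1
    refine ⟨fun p => f p.1, fun h => hf (funext fun x => congrFun h (x, Classical.arbitrary α)), ?_⟩
    rw [lapMatrix_lexProd_mulVec_comp_fst, hLf]
    ext p
    simp [mul_assoc]

end LexProd

instance powVert.instNonempty {α : Type u} [Nonempty α] : ∀ k, Nonempty (powVert α k)
  | 0 => ⟨PUnit.unit⟩
  | 1 => inferInstanceAs (Nonempty α)
  | k + 2 =>
      have := powVert.instNonempty (α := α) (k + 1)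
      inferInstanceAs (Nonempty (powVert α (k + 1) × α))

open Classical in
theorem isGreatest_lapSpectrum_lexPow {α : Type u} [Fintype α] [Nonempty α]
    (H : SimpleGraph α) {c : ℝ} (hH : IsGreatest {t | t ∈ lapSpectrum H} c)
    (hdeg : ∀ y, (H.degree y : ℝ) + 1 ≤ c) (j : ℕ) :
    IsGreatest {t | t ∈ lapSpectrum (lexPow H (j + 1))} (Fintype.card α ^ j * c) := by
  suffices IsGreatest {t | t ∈ lapSpectrum (lexPow H (j + 1))} (Fintype.card α ^ j * c) ∧
      ∀ x, ((lexPow H (j + 1)).degree x : ℝ) + 1 ≤ Fintype.card α ^ j * c from this.1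
  induction j with
  | zero =>
    rw [pow_zero, one_mul]
    exact ⟨hH, hdeg⟩
  | succ j ih =>
    obtain ⟨ih, ihdeg⟩ := ih
    refine ⟨?_, fun (p : powVert α (j + 1) × α) => ?_⟩
    · rw [pow_succ', mul_assoc]
      exact isGreatest_lapSpectrum_lexProd (lexPow H (j + 1)) H ih ihdeg
    · change ((lexProd (lexPow H (j + 1)) H).degree p : ℝ) + 1 ≤ _
      have hy : (H.degree p.2 : ℝ) + 1 ≤ Fintype.card α := by
        exact_mod_cast H.degree_lt_card_verts p.2
      rw [degree_lexProd, pow_succ', mul_assoc]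
      push_cast
      nlinarith [ihdeg p.1]

/-- The largest Laplacian eigenvalue of `H^k`: if `nu : Fin (n^k) → ℝ`
lists the Laplacian eigenvalues of `H^k` in non-increasing order, then
`μ_1(H^k) = n^(k-1)·μ_1(H)`. -/
theorem lapIndex_lexPow {α : Type u} [Fintype α]
    (H : SimpleGraph α) (n : ℕ) (hn : Fintype.card α = n) (hconn : H.Connected)
    (muH : Fin n → ℝ) (hanti : Antitone muH)
    (hspec : lapSpectrum H = Multiset.map muH Finset.univ.val) :
    ∀ k : ℕ, 1 ≤ k →
      ∀ nu : Fin (n ^ k) → ℝ, Antitone nu →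
        lapSpectrum (lexPow H k) = Multiset.map nu Finset.univ.val →
        nu ⟨0, by
            have h0 : 0 < n := hn ▸ Fintype.card_pos_iff.mpr hconn.nonempty
            exact pow_pos h0 k⟩ =
          (n : ℝ) ^ (k - 1) *
            muH ⟨0, hn ▸ Fintype.card_pos_iff.mpr hconn.nonempty⟩ := by
  classical
  intro k hk nu hnu hspec'
  obtain ⟨j, rfl⟩ := Nat.exists_eq_add_of_le' hk
  subst hn
  have : Nonempty α := hconn.nonempty
  rw [Nat.add_sub_cancel]
  rcases Nat.lt_or_ge 1 (Fintype.card α) with hn | hn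
  · have : Nontrivial α := Fintype.one_lt_card_iff_nontrivial.mp hn
    have hμ := isGreatest_of_eq_map_antitone hanti hspec Fintype.card_pos
    have hdeg : ∀ y, (H.degree y : ℝ) + 1 ≤ muH ⟨0, Fintype.card_pos⟩ := fun y =>
      H.degree_add_one_le_of_dotProduct_le
        (SimpleGraph.dotProduct_lapMatrix_mulVec_le_of_isGreatest hμ)
        (hconn.preconnected.degree_pos_of_nontrivial y)
    exact (isGreatest_of_eq_map_antitone hnu hspec' (pow_pos Fintype.card_pos _)).unique
      (isGreatest_lapSpectrum_lexPow H hμ hdeg j)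
  · rw [H.eq_zero_of_lapSpectrum_eq_map hn hspec,
      (lexPow H (j + 1)).eq_zero_of_lapSpectrum_eq_map
        ((Nat.pow_le_one_iff j.succ_ne_zero).mpr hn) hspec', mul_zero]
end
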